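/- arXiv:2011.13837 — 2 statements merged into one kernel-verified Lean document; each statement's English description precedes it below -/
import Mathlib

section
/- Strong swappability implies swappability: if transactions T and T' are strongly swappable (there exist safe approximations W, R of the written/read observables of T and W', R' of those of T' such that (R ∪ W) ∩ W' = ∅ = (R' ∪ W') ∩ W), then for every state σ, ⟦TT'⟧σ = ⟦T'T⟧σ. -/
variable {Obs Val Tx : Type*}

/-- W is a safe approximation of the observables written by T. -/
def SafeW (sem : Tx → (Obs → Val) → (Obs → Val)) (W : Set Obs) (T : Tx) : Prop :=
  ∀ Q : Set Obs, Q ∩ W = ∅ → ∀ σ, ∀ a ∈ Q, sem T σ a = σ a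

/-- R is a safe approximation of the observables read by T: if two states agree
on R and on Q, then executing T from each yields states that agree on Q. -/
def SafeR (sem : Tx → (Obs → Val) → (Obs → Val)) (R : Set Obs) (T : Tx) : Prop :=
  ∀ (σ₁ σ₂ : Obs → Val) (Q : Set Obs),
    (∀ a ∈ R, σ₁ a = σ₂ a) → (∀ a ∈ Q, σ₁ a = σ₂ a) →
    ∀ a ∈ Q, sem T σ₁ a = sem T σ₂ a

/-- Strong swappability implies swappability: if T ≠ T' and there are safe
write/read approximations with (R ∪ W) ∩ W' = ∅ = (R' ∪ W') ∩ W, then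
⟦TT'⟧σ = ⟦T'T⟧σ for every state σ. -/
theorem strong_swap_implies_swap (sem : Tx → (Obs → Val) → (Obs → Val))
    (T T' : Tx) (hne : T ≠ T')
    (h : ∃ W R W' R' : Set Obs,
      SafeW sem W T ∧ SafeR sem R T ∧ SafeW sem W' T' ∧ SafeR sem R' T' ∧
      (R ∪ W) ∩ W' = ∅ ∧ (R' ∪ W') ∩ W = ∅) :
    ∀ σ : Obs → Val, sem T' (sem T σ) = sem T (sem T' σ) := by
  obtain ⟨W, R, W', R', hW, hR, hW', hR', hd1, hd2⟩ := h
  have d1 : ∀ b, b ∈ R ∪ W → b ∉ W' := by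
    intro b hb hb'
    exact Set.eq_empty_iff_forall_notMem.1 hd1 b ⟨hb, hb'⟩
  have d2 : ∀ b, b ∈ R' ∪ W' → b ∉ W := by
    intro b hb hb'
    exact Set.eq_empty_iff_forall_notMem.1 hd2 b ⟨hb, hb'⟩
  intro σ
  funext a
  have singleton : ∀ (S : Set Obs) (x : Obs), x ∉ S → ({x} : Set Obs) ∩ S = ∅ := by
    intro S x hx
    ext y
    simp only [Set.mem_inter_iff, Set.mem_singleton_iff, Set.mem_empty_iff_false, iff_false]
    rintro ⟨rfl, hy⟩; exact hx hy
  by_cases haW' : a ∈ W'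
  · have haW : a ∉ W := d2 a (Or.inr haW')
    -- RHS: sem T (sem T' σ) a = sem T' σ a
    have h1 : sem T (sem T' σ) a = sem T' σ a :=
      hW {a} (singleton W a haW) (sem T' σ) a rfl
    -- LHS: sem T' (sem T σ) a = sem T' σ a  via SafeR R' T'
    have hagreeR' : ∀ b ∈ R', sem T σ b = σ b := by
      intro b hb
      exact hW {b} (singleton W b (d2 b (Or.inl hb))) σ b rfl
    have hagreeQ : ∀ b ∈ ({a} : Set Obs), sem T σ b = σ b := by
      rintro b rfl
      exact hW {b} (singleton W b haW) σ b rfl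
    have h2 : sem T' (sem T σ) a = sem T' σ a :=
      hR' (sem T σ) σ {a} hagreeR' hagreeQ a rfl
    rw [h1, h2]
  · -- LHS: sem T' (sem T σ) a = sem T σ a
    have h1 : sem T' (sem T σ) a = sem T σ a :=
      hW' {a} (singleton W' a haW') (sem T σ) a rfl
    have hagreeR : ∀ b ∈ R, σ b = sem T' σ b := by
      intro b hb
      exact (hW' {b} (singleton W' b (d1 b (Or.inl hb))) σ b rfl).symm
    have hagreeQ : ∀ b ∈ ({a} : Set Obs), σ b = sem T' σ b := by
      rintro b rfl
      exact (hW' {b} (singleton W' b haW') σ b rfl).symm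
    have h2 : sem T σ a = sem T (sem T' σ) a :=
      hR σ (sem T' σ) {a} hagreeR hagreeQ a rfl
    rw [h1, h2]
end

section
/- Parallel execution of pairwise strongly-swappable transactions equals any serialization: if every two distinct transactions in a finite multiset A are strongly swappable (their safe write-approximations are pairwise disjoint, and each one's write-approximation is disjoint from the others' read-approximations), then for any enumeration T₁,…,Tₙ of A and any state σ, applying the merged update ⊕_{T∈A} Δ(σ,T) to σ equals the sequential execution ⟦T₁⋯Tₙ⟧σ, where Δ(σ,T) is the minimal state update such that σΔ(σ,T) = ⟦T⟧σ and dom(Δ(σ,T)) ⊆ W(T). -/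
variable {Obs Val Tx : Type*} [DecidableEq Tx]

/-- The minimal state update Δ(σ,T): records exactly the observables whose value
changes when executing T from σ. -/
noncomputable def delta (sem : Tx → (Obs → Val) → (Obs → Val)) (σ : Obs → Val)
    (T : Tx) : Obs → Option Val :=
  open Classical in
  fun a => if sem T σ a ≠ σ a then some (sem T σ a) else none

/-- Merge (union) of a list of state updates with pairwise disjoint domains. -/
def mergeAll (ps : List (Obs → Option Val)) : Obs → Option Val :=
  fun a => ps.foldr (fun π acc => (π a).orElse (fun _ => acc)) none

/-- Applying a state update to a (total) state. -/
def applyUpd (σ : Obs → Val) (π : Obs → Option Val) : Obs → Val :=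
  fun a => (π a).getD (σ a)

/-- Sequential execution of a list of transactions. -/
def execL (sem : Tx → (Obs → Val) → (Obs → Val)) : List Tx → (Obs → Val) → (Obs → Val)
  | [], σ => σ
  | T :: l, σ => execL sem l (sem T σ)

/-!
Induction on the enumeration `T :: l`. Since `T` writes nothing that a later transaction reads
or writes, running `T` first leaves every later update unchanged, `Δ(⟦T⟧σ, T') = Δ(σ, T')`, and
the domain of `Δ(σ, T) ⊆ W(T)` is disjoint from theirs. Hence applying the merged update is
applying `Δ(σ, T)`, which yields `⟦T⟧σ`, followed by the merged update of `l` from `⟦T⟧σ`.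
-/

def IsWriteApprox (sem : Tx → (Obs → Val) → (Obs → Val)) (W : Tx → Set Obs) : Prop :=
  ∀ (T : Tx) (σ : Obs → Val) (a : Obs), a ∉ W T → sem T σ a = σ a

def IsReadApprox (sem : Tx → (Obs → Val) → (Obs → Val)) (R : Tx → Set Obs) : Prop :=
  ∀ (T : Tx) (σ₁ σ₂ : Obs → Val) (Q : Set Obs),
    (∀ a ∈ R T, σ₁ a = σ₂ a) → (∀ a ∈ Q, σ₁ a = σ₂ a) → ∀ a ∈ Q, sem T σ₁ a = sem T σ₂ a

def StronglySwappable (W R : Tx → Set Obs) (T T' : Tx) : Prop :=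
  (R T ∪ W T) ∩ W T' = ∅ ∧ (R T' ∪ W T') ∩ W T = ∅

omit [DecidableEq Tx] in
theorem StronglySwappable.disjoint_write_write {W R : Tx → Set Obs} {T T' : Tx}
    (h : StronglySwappable W R T T') : Disjoint (W T) (W T') :=
  Set.disjoint_iff_inter_eq_empty.mpr <| Set.subset_empty_iff.mp <|
    h.1 ▸ Set.inter_subset_inter_left _ Set.subset_union_right

omit [DecidableEq Tx] in
theorem StronglySwappable.disjoint_read_write {W R : Tx → Set Obs} {T T' : Tx}
    (h : StronglySwappable W R T T') : Disjoint (R T') (W T) :=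
  Set.disjoint_iff_inter_eq_empty.mpr <| Set.subset_empty_iff.mp <|
    h.2 ▸ Set.inter_subset_inter_left _ Set.subset_union_left

theorem List.pairwise_of_forall_mem_erase {α : Type*} [DecidableEq α] {r : α → α → Prop}
    {l : List α} (h : ∀ x ∈ l, ∀ y ∈ (l : Multiset α).erase x, r x y) : l.Pairwise r := by
  induction l with
  | nil => exact .nil
  | cons x l ih =>
    refine .cons (fun y hy => h x mem_cons_self y (by simpa using hy)) (ih fun z hz y hy => ?_)
    refine h z (mem_cons_of_mem x hz) y ?_
    rw [Multiset.coe_erase] at hy ⊢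
    exact ((sublist_cons_self x l).erase z).subset hy

theorem mergeAll_cons (π : Obs → Option Val) (ps : List (Obs → Option Val)) (a : Obs) :
    mergeAll (π :: ps) a = (π a).orElse fun _ => mergeAll ps a :=
  rfl

theorem mergeAll_apply_eq_none {ps : List (Obs → Option Val)} {a : Obs}
    (h : ∀ π ∈ ps, π a = none) : mergeAll ps a = none := by
  induction ps with
  | nil => rfl
  | cons π ps ih =>
    rw [mergeAll_cons, h π List.mem_cons_self,
      ih fun π' hπ' => h π' (List.mem_cons_of_mem π hπ')]
    rfl

theorem applyUpd_mergeAll_cons {π : Obs → Option Val} {ps : List (Obs → Option Val)}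
    (h : ∀ a, π a ≠ none → ∀ π' ∈ ps, π' a = none) (σ : Obs → Val) :
    applyUpd σ (mergeAll (π :: ps)) = applyUpd (applyUpd σ π) (mergeAll ps) := by
  funext a
  cases hπ : π a with
  | none => simp [applyUpd, mergeAll_cons, hπ]
  | some v =>
    have hrest := mergeAll_apply_eq_none (h a (by simp [hπ]))
    simp [applyUpd, mergeAll_cons, hπ, hrest]

omit [DecidableEq Tx] in
theorem applyUpd_delta (sem : Tx → (Obs → Val) → (Obs → Val)) (σ : Obs → Val) (T : Tx) :
    applyUpd σ (delta sem σ T) = sem T σ := by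
  funext a
  by_cases ha : sem T σ a = σ a <;> simp [applyUpd, delta, ha]

omit [DecidableEq Tx] in
theorem delta_apply_eq_none {sem : Tx → (Obs → Val) → (Obs → Val)} {σ : Obs → Val} {T : Tx}
    {a : Obs} (ha : sem T σ a = σ a) : delta sem σ T a = none := by
  simp [delta, ha]

omit [DecidableEq Tx] in
theorem delta_sem_eq_delta {sem : Tx → (Obs → Val) → (Obs → Val)} {W R : Tx → Set Obs}
    (hW : IsWriteApprox sem W) (hR : IsReadApprox sem R) {T T' : Tx}
    (hWW : Disjoint (W T) (W T')) (hRW : Disjoint (R T') (W T)) (σ : Obs → Val) :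
    delta sem (sem T σ) T' = delta sem σ T' := by
  funext b
  by_cases hb : b ∈ W T
  · have hb' : b ∉ W T' := hWW.notMem_of_mem_left hb
    rw [delta_apply_eq_none (hW T' _ b hb'), delta_apply_eq_none (hW T' σ b hb')]
  · have hTb : sem T σ b = σ b := hW T σ b hb
    have hT'b : sem T' (sem T σ) b = sem T' σ b :=
      hR T' _ σ {b} (fun a ha => hW T σ a (hRW.notMem_of_mem_left ha))
        (fun a ha => ha ▸ hTb) b rfl
    simp only [delta]
    rw [hT'b, hTb]

omit [DecidableEq Tx] in
theorem applyUpd_mergeAll_delta_eq_execL {sem : Tx → (Obs → Val) → (Obs → Val)}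
    {W R : Tx → Set Obs} (hW : IsWriteApprox sem W) (hR : IsReadApprox sem R) {l : List Tx}
    (hl : l.Pairwise (StronglySwappable W R)) (σ : Obs → Val) :
    applyUpd σ (mergeAll (l.map (delta sem σ))) = execL sem l σ := by
  induction l generalizing σ with
  | nil => rfl
  | cons T l ih =>
    obtain ⟨hT, hl⟩ := List.pairwise_cons.mp hl
    have hWW : ∀ T' ∈ l, Disjoint (W T) (W T') := fun T' hT' => (hT T' hT').disjoint_write_write
    have hRW : ∀ T' ∈ l, Disjoint (R T') (W T) := fun T' hT' => (hT T' hT').disjoint_read_write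
    have hdom : ∀ a, delta sem σ T a ≠ none → ∀ π ∈ l.map (delta sem σ), π a = none := by
      intro a ha π hπ
      obtain ⟨T', hT', rfl⟩ := List.mem_map.mp hπ
      have haW : a ∈ W T := by_contra fun h => ha (delta_apply_eq_none (hW T σ a h))
      exact delta_apply_eq_none (hW T' σ a ((hWW T' hT').notMem_of_mem_left haW))
    have hrest : l.map (delta sem σ) = l.map (delta sem (sem T σ)) :=
      List.map_congr_left fun T' hT' => (delta_sem_eq_delta hW hR (hWW T' hT') (hRW T' hT') σ).symm
    rw [List.map_cons, applyUpd_mergeAll_cons hdom, applyUpd_delta, hrest, ih hl]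
    rfl

/-- Parallel execution of pairwise strongly-swappable transactions equals any
serialization: applying the merged minimal updates ⊕_{T∈A} Δ(σ,T) to σ equals
the sequential execution of any enumeration of A. -/
theorem parallel_eq_serial
    (sem : Tx → (Obs → Val) → (Obs → Val)) (W R : Tx → Set Obs)
    (hW : ∀ (T : Tx) (σ : Obs → Val) (a : Obs), a ∉ W T → sem T σ a = σ a)
    (hR : ∀ (T : Tx) (σ₁ σ₂ : Obs → Val) (Q : Set Obs),
      (∀ a ∈ R T, σ₁ a = σ₂ a) → (∀ a ∈ Q, σ₁ a = σ₂ a) →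
      ∀ a ∈ Q, sem T σ₁ a = sem T σ₂ a)
    (A : Multiset Tx)
    (hA : ∀ T ∈ A, ∀ T' ∈ A.erase T,
      (R T ∪ W T) ∩ W T' = ∅ ∧ (R T' ∪ W T') ∩ W T = ∅)
    (l : List Tx) (hl : (l : Multiset Tx) = A) (σ : Obs → Val) :
    applyUpd σ (mergeAll (l.map (delta sem σ))) = execL sem l σ := by
  subst hl
  exact applyUpd_mergeAll_delta_eq_execL hW hR (List.pairwise_of_forall_mem_erase hA) σ
end
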